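/- arXiv:2509.10415 — 2 statements merged into one kernel-verified Lean document; each statement's English description precedes it below -/
import Mathlib

section
/- (Theorem 5.2, geometric decay of detail coefficients.) Let p ≥ 1 and Γ ≥ 0, and let t ↦ μ_t be a curve of measures in P_p(ℝ^d) defined for all real t and satisfying W_p(μ_s, μ_t) ≤ Γ·|s − t| for all s, t ∈ ℝ (e.g., an absolutely continuous curve whose metric derivative is everywhere at most Γ). Fix an integer ℓ ≥ 1 and i ∈ ℤ. Let γ ∈ Π(μ_{2i·2^{-ℓ}}, μ_{(2i+2)·2^{-ℓ}}) be a coupling attaining the infimum defining W_p(μ_{2i·2^{-ℓ}}, μ_{(2i+2)·2^{-ℓ}})^p, and let m = (π^{1/2})_#γ. Then W_p(μ_{(2i+1)·2^{-ℓ}}, m) ≤ Γ·2^{1−ℓ}. In other words, the detail coefficients of the elementary multiscale transform of the dyadic samples of such a curve satisfy ‖ψ^{(ℓ)}‖_∞ ≤ Γ·2^{1−ℓ}. -/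
/-!
By the triangle inequality for `W_p`, `W_p(μ_{(2i+1)h}, m) ≤ W_p(μ_{(2i+1)h}, μ_{2ih}) + W_p(μ_{2ih}, m)`
with `h = 2^{-ℓ}`. Pushing the optimal coupling `γ` forward by `(x, y) ↦ (x, (x + y)/2)` couples
`μ_{2ih}` with `m` at cost `2^{-p}` times the optimal cost, so `W_p(μ_{2ih}, m)` is at most half of
`W_p(μ_{2ih}, μ_{(2i+2)h}) ≤ 2Γh`; the first term is at most `Γh`.

The triangle inequality itself comes from gluing two couplings along their common marginal
(disintegrate both over it and take the conditionally independent product), followed by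
Minkowski's inequality.
-/

open MeasureTheory ENNReal NNReal ProbabilityTheory

noncomputable section

variable {E : Type*} [NormedAddCommGroup E] [MeasurableSpace E]

/-- The set Π(μ,ν) of couplings of `μ` and `ν`: measures on the product whose
first marginal is `μ` and second marginal is `ν`. -/
def couplings (μ ν : Measure E) : Set (Measure (E × E)) :=
  {γ | γ.map Prod.fst = μ ∧ γ.map Prod.snd = ν}

/-- The Kantorovich transport cost `∫ ‖x - y‖^p dγ(x,y)`. -/
def transportCost (p : ℝ) (γ : Measure (E × E)) : ℝ≥0∞ :=
  ∫⁻ z, (‖z.1 - z.2‖₊ : ℝ≥0∞) ^ p ∂γ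

/-- `W_p(μ,ν)^p = inf_{γ ∈ Π(μ,ν)} ∫ ‖x-y‖^p dγ`. -/
def wassersteinPow (p : ℝ) (μ ν : Measure E) : ℝ≥0∞ :=
  ⨅ γ ∈ couplings μ ν, transportCost p γ

/-- The `p`-Wasserstein distance `W_p(μ,ν)`. -/
def wasserstein (p : ℝ) (μ ν : Measure E) : ℝ≥0∞ :=
  wassersteinPow p μ ν ^ (1 / p)

/-- Membership in the Wasserstein space `P_p`: a Borel probability measure with
finite `p`-th moment. -/
def MemPp (p : ℝ) (μ : Measure E) : Prop :=
  IsProbabilityMeasure μ ∧ ∫⁻ x, (‖x‖₊ : ℝ≥0∞) ^ p ∂μ < ∞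

lemma isFiniteMeasure_of_mem_couplings {α : Type*} [MeasurableSpace α] {μ ν : Measure α}
    [IsFiniteMeasure μ] {γ : Measure (α × α)} (hγ : γ ∈ couplings μ ν) : IsFiniteMeasure γ := by
  constructor
  rw [← Set.preimage_univ (f := Prod.fst), ← Measure.map_apply measurable_fst .univ, hγ.1]
  exact measure_lt_top μ _

section Gluing

variable {α β γ : Type*} [MeasurableSpace α] [MeasurableSpace β] [MeasurableSpace γ]
  [StandardBorelSpace α] [Nonempty α] [StandardBorelSpace γ] [Nonempty γ]

theorem MeasureTheory.Measure.exists_gluing (σ : Measure (α × β)) (θ : Measure (β × γ))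
    [IsFiniteMeasure σ] [IsFiniteMeasure θ] (h : σ.snd = θ.fst) :
    ∃ π : Measure (β × α × γ),
      π.map (fun w => (w.2.1, w.1)) = σ ∧ π.map (fun w => (w.1, w.2.2)) = θ := by
  set κ := (σ.map Prod.swap).condKernel
  set η := θ.condKernel
  have hσ : θ.fst ⊗ₘ κ = σ.map Prod.swap := by
    rw [← h, ← Measure.fst_map_swap]; exact Measure.disintegrate _ _
  refine ⟨θ.fst ⊗ₘ (κ ×ₖ η), ?_, ?_⟩
  · calc (θ.fst ⊗ₘ (κ ×ₖ η)).map (fun w => (w.2.1, w.1))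
        = ((θ.fst ⊗ₘ (κ ×ₖ η)).map (Prod.map id Prod.fst)).map Prod.swap := by
          rw [Measure.map_map (by fun_prop) (by fun_prop)]; rfl
      _ = σ := by
          rw [← Measure.compProd_map measurable_fst, ← Kernel.fst_eq, Kernel.fst_prod, hσ,
            Measure.map_map measurable_swap measurable_swap, Prod.swap_swap_eq, Measure.map_id]
  · rw [show (fun w : β × α × γ => (w.1, w.2.2)) = Prod.map id Prod.snd from rfl,
      ← Measure.compProd_map measurable_snd, ← Kernel.snd_eq, Kernel.snd_prod,
      Measure.disintegrate]

end Gluing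

lemma wasserstein_le_transportCost_rpow {p : ℝ} (hp : 0 < p) {μ ν : Measure E}
    {γ : Measure (E × E)} (hγ : γ ∈ couplings μ ν) :
    wasserstein p μ ν ≤ transportCost p γ ^ (1 / p) :=
  ENNReal.rpow_le_rpow (iInf₂_le γ hγ) (by positivity)

lemma wasserstein_eq_iInf {p : ℝ} (hp : 0 < p) (μ ν : Measure E) :
    wasserstein p μ ν = ⨅ γ ∈ couplings μ ν, transportCost p γ ^ (1 / p) := by
  rw [wasserstein, wassersteinPow, iInf_subtype', iInf_subtype']
  exact (ENNReal.orderIsoRpow (1 / p) (by positivity)).map_iInf _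

section Borel

variable [BorelSpace E] [SecondCountableTopology E]

lemma transportCost_map {Y : Type*} [MeasurableSpace Y] (p : ℝ) (π : Measure Y) {f : Y → E × E}
    (hf : Measurable f) :
    transportCost p (π.map f) = ∫⁻ y, (‖(f y).1 - (f y).2‖₊ : ℝ≥0∞) ^ p ∂π :=
  lintegral_map (by fun_prop) hf

lemma transportCost_map_interpolate [NormedSpace ℝ E] {p : ℝ} (hp : 0 ≤ p)
    (γ : Measure (E × E)) (t : ℝ) :
    transportCost p (γ.map fun z => (z.1, (1 - t) • z.1 + t • z.2)) =
      (‖t‖₊ : ℝ≥0∞) ^ p * transportCost p γ := by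
  rw [transportCost_map p γ (by fun_prop), transportCost, ← lintegral_const_mul _ (by fun_prop)]
  refine lintegral_congr fun z => ?_
  rw [show z.1 - ((1 - t) • z.1 + t • z.2) = t • (z.1 - z.2) by module, nnnorm_smul,
    ENNReal.coe_mul, ENNReal.mul_rpow_of_nonneg _ _ hp]

lemma wasserstein_map_interpolate_le [NormedSpace ℝ E] {p : ℝ} (hp : 0 < p) {μ ν : Measure E}
    {γ : Measure (E × E)} (hγ : γ ∈ couplings μ ν) (t : ℝ) :
    wasserstein p μ (γ.map fun z => (1 - t) • z.1 + t • z.2) ≤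
      ‖t‖₊ * transportCost p γ ^ (1 / p) := by
  have hcoupling : (γ.map fun z => (z.1, (1 - t) • z.1 + t • z.2)) ∈
      couplings μ (γ.map fun z => (1 - t) • z.1 + t • z.2) := by
    constructor <;> rw [Measure.map_map (by fun_prop) (by fun_prop)]
    exacts [hγ.1, rfl]
  refine (wasserstein_le_transportCost_rpow hp hcoupling).trans_eq ?_
  rw [transportCost_map_interpolate hp.le, ENNReal.mul_rpow_of_nonneg _ _ (by positivity),
    ← ENNReal.rpow_mul, mul_one_div_cancel hp.ne', ENNReal.rpow_one]

end Borel

section Polish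

variable [BorelSpace E] [PolishSpace E]

lemma exists_mem_couplings_transportCost_rpow_le {p : ℝ} (hp : 1 ≤ p) {μ ν ρ : Measure E}
    [IsFiniteMeasure μ] [IsFiniteMeasure ν] {σ θ : Measure (E × E)}
    (hσ : σ ∈ couplings μ ν) (hθ : θ ∈ couplings ν ρ) :
    ∃ τ ∈ couplings μ ρ,
      transportCost p τ ^ (1 / p) ≤ transportCost p σ ^ (1 / p) + transportCost p θ ^ (1 / p) := by
  have := isFiniteMeasure_of_mem_couplings hσ
  have := isFiniteMeasure_of_mem_couplings hθ
  obtain ⟨π, hπσ, hπθ⟩ := Measure.exists_gluing σ θ (hσ.2.trans hθ.1.symm)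
  refine ⟨π.map fun w => (w.2.1, w.2.2), ⟨?_, ?_⟩, ?_⟩
  · rw [← hσ.1, ← hπσ, Measure.map_map measurable_fst (by fun_prop),
      Measure.map_map measurable_fst (by fun_prop)]
    rfl
  · rw [← hθ.2, ← hπθ, Measure.map_map measurable_snd (by fun_prop),
      Measure.map_map measurable_snd (by fun_prop)]
    rfl
  calc transportCost p (π.map fun w => (w.2.1, w.2.2)) ^ (1 / p)
      ≤ (∫⁻ w, ((‖w.2.1 - w.1‖₊ : ℝ≥0∞) + ‖w.1 - w.2.2‖₊) ^ p ∂π) ^ (1 / p) := by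
        rw [transportCost_map p π (by fun_prop)]
        gcongr with w
        simp only [← nndist_eq_nnnorm]
        exact_mod_cast nndist_triangle w.2.1 w.1 w.2.2
    _ ≤ (∫⁻ w, (‖w.2.1 - w.1‖₊ : ℝ≥0∞) ^ p ∂π) ^ (1 / p) +
          (∫⁻ w, (‖w.1 - w.2.2‖₊ : ℝ≥0∞) ^ p ∂π) ^ (1 / p) :=
        ENNReal.lintegral_Lp_add_le (by fun_prop) (by fun_prop) hp
    _ = transportCost p σ ^ (1 / p) + transportCost p θ ^ (1 / p) := by
        rw [← hπσ, ← hπθ, transportCost_map p π (by fun_prop),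
          transportCost_map p π (by fun_prop)]

theorem wasserstein_triangle {p : ℝ} (hp : 1 ≤ p) (μ ν ρ : Measure E)
    [IsFiniteMeasure μ] [IsFiniteMeasure ν] :
    wasserstein p μ ρ ≤ wasserstein p μ ν + wasserstein p ν ρ := by
  have hp0 : 0 < p := zero_lt_one.trans_le hp
  rw [wasserstein_eq_iInf hp0 μ ν, wasserstein_eq_iInf hp0 ν ρ]
  refine ENNReal.le_iInf₂_add_iInf₂ fun σ hσ θ hθ => ?_
  obtain ⟨τ, hτ, hcost⟩ := exists_mem_couplings_transportCost_rpow_le hp hσ hθ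
  exact (wasserstein_le_transportCost_rpow hp0 hτ).trans hcost

end Polish

theorem detail_decay_general {d : ℕ} (p : ℝ) (hp : 1 ≤ p) (Γ : ℝ)
    (μ : ℝ → Measure (EuclideanSpace ℝ (Fin d))) (hμ : ∀ t, MemPp p (μ t))
    (hLip : ∀ s t : ℝ, wasserstein p (μ s) (μ t) ≤ ENNReal.ofReal (Γ * |s - t|))
    (ℓ : ℕ) (i : ℤ)
    (γ : Measure (EuclideanSpace ℝ (Fin d) × EuclideanSpace ℝ (Fin d)))
    (hγ : γ ∈ couplings (μ (((2*i : ℤ) : ℝ) * (2:ℝ)^(-(ℓ:ℤ))))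
      (μ (((2*i+2 : ℤ) : ℝ) * (2:ℝ)^(-(ℓ:ℤ)))))
    (hopt : transportCost p γ = wassersteinPow p
      (μ (((2*i : ℤ) : ℝ) * (2:ℝ)^(-(ℓ:ℤ)))) (μ (((2*i+2 : ℤ) : ℝ) * (2:ℝ)^(-(ℓ:ℤ)))))
    (m : Measure (EuclideanSpace ℝ (Fin d)))
    (hm : m = γ.map (fun z => (1/2 : ℝ) • z.1 + (1/2 : ℝ) • z.2)) :
    wasserstein p (μ (((2*i+1 : ℤ) : ℝ) * (2:ℝ)^(-(ℓ:ℤ)))) m ≤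
      ENNReal.ofReal (Γ * (2:ℝ)^((1:ℤ) - (ℓ:ℤ))) := by
  set c : ℝ := (2:ℝ)^(-(ℓ:ℤ))
  set tL : ℝ := ((2*i : ℤ) : ℝ) * c
  set tM : ℝ := ((2*i+1 : ℤ) : ℝ) * c
  set tR : ℝ := ((2*i+2 : ℤ) : ℝ) * c
  have := (hμ tL).1
  have := (hμ tM).1
  have hML : wasserstein p (μ tM) (μ tL) ≤ ENNReal.ofReal (Γ * c) := by
    convert hLip tM tL using 3
    rw [show tM - tL = c by simp only [tM, tL]; push_cast; ring, abs_of_pos (by positivity)]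
  have hLR : wasserstein p (μ tL) (μ tR) ≤ 2 * ENNReal.ofReal (Γ * c) := by
    convert hLip tL tR using 1
    rw [abs_sub_comm, show tR - tL = 2 * c by simp only [tR, tL]; push_cast; ring,
      abs_of_pos (by positivity), ← ENNReal.ofReal_ofNat 2, ← ENNReal.ofReal_mul zero_le_two]
    ring_nf
  have hLm : wasserstein p (μ tL) m ≤ 2⁻¹ * wasserstein p (μ tL) (μ tR) := by
    have hmid := wasserstein_map_interpolate_le (zero_lt_one.trans_le hp) hγ (1 / 2)
    rw [hopt, ← wasserstein, show (1 : ℝ) - 1 / 2 = 1 / 2 by norm_num] at hmid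
    rw [hm]
    convert hmid using 2
    norm_num
  calc wasserstein p (μ tM) m
      ≤ wasserstein p (μ tM) (μ tL) + wasserstein p (μ tL) m := wasserstein_triangle hp _ _ _
    _ ≤ ENNReal.ofReal (Γ * c) + 2⁻¹ * (2 * ENNReal.ofReal (Γ * c)) := by
        gcongr
        exact hLm.trans (by gcongr)
    _ = 2 * ENNReal.ofReal (Γ * c) := by
        rw [ENNReal.inv_mul_cancel_left two_ne_zero ofNat_ne_top, two_mul]
    _ = ENNReal.ofReal (Γ * (2:ℝ)^((1:ℤ) - (ℓ:ℤ))) := by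
        rw [zpow_sub₀ two_ne_zero, zpow_one, div_eq_mul_inv, ← zpow_neg, mul_left_comm,
          ENNReal.ofReal_mul zero_le_two, ENNReal.ofReal_ofNat]

/-- Theorem 5.2, geometric decay of detail coefficients. -/
theorem detail_decay {d : ℕ} (p : ℝ) (hp : 1 ≤ p) (Γ : ℝ) (hΓ : 0 ≤ Γ)
    (μ : ℝ → Measure (EuclideanSpace ℝ (Fin d))) (hμ : ∀ t, MemPp p (μ t))
    (hLip : ∀ s t : ℝ, wasserstein p (μ s) (μ t) ≤ ENNReal.ofReal (Γ * |s - t|))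
    (ℓ : ℕ) (hℓ : 1 ≤ ℓ) (i : ℤ)
    (γ : Measure (EuclideanSpace ℝ (Fin d) × EuclideanSpace ℝ (Fin d)))
    (hγ : γ ∈ couplings (μ (((2*i : ℤ) : ℝ) * (2:ℝ)^(-(ℓ:ℤ))))
      (μ (((2*i+2 : ℤ) : ℝ) * (2:ℝ)^(-(ℓ:ℤ)))))
    (hopt : transportCost p γ = wassersteinPow p
      (μ (((2*i : ℤ) : ℝ) * (2:ℝ)^(-(ℓ:ℤ)))) (μ (((2*i+2 : ℤ) : ℝ) * (2:ℝ)^(-(ℓ:ℤ)))))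
    (m : Measure (EuclideanSpace ℝ (Fin d)))
    (hm : m = γ.map (fun z => (1/2 : ℝ) • z.1 + (1/2 : ℝ) • z.2)) :
    wasserstein p (μ (((2*i+1 : ℤ) : ℝ) * (2:ℝ)^(-(ℓ:ℤ)))) m ≤
      ENNReal.ofReal (Γ * (2:ℝ)^((1:ℤ) - (ℓ:ℤ))) :=
  detail_decay_general p hp Γ μ hμ hLip ℓ i γ hγ hopt m hm
end
end

section
/- (Optimal map between one-dimensional Gaussians.) Let m_0, m_1 ∈ ℝ and σ_0, σ_1 > 0, and define T : ℝ → ℝ by T(x) = m_1 + √(σ_1/σ_0)·(x − m_0). Then: (i) T_# N(m_0, σ_0) = N(m_1, σ_1); (ii) ∫_ℝ (x − T(x))^2 dN(m_0, σ_0)(x) = (m_0 − m_1)^2 + (√σ_0 − √σ_1)^2; consequently the coupling (I, T)_# N(m_0, σ_0) ∈ Π(N(m_0,σ_0), N(m_1,σ_1)) attains the infimum defining W_2(N(m_0,σ_0), N(m_1,σ_1))^2. -/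
/-!
The map `T` is affine, so it pushes `N(m₀, σ₀)` forward to the Gaussian with the transformed
mean and variance, and its cost is the second moment of the Gaussian `(I - T)_# N(m₀, σ₀)`.
Optimality is the Gelbrich bound, valid for every coupling `(X, Y)` with square-integrable
marginals: `E (X - Y)² = (E X - E Y)² + Var X + Var Y - 2 Cov(X, Y)`, and Cauchy–Schwarz
`Cov(X, Y) ≤ √(Var X) √(Var Y)` bounds this below by
`(E X - E Y)² + (√(Var X) - √(Var Y))²`, which for the two Gaussians is the cost of `T`.
-/

open MeasureTheory ENNReal NNReal ProbabilityTheory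

noncomputable section

variable {E : Type*} [NormedAddCommGroup E] [MeasurableSpace E]

section Moments

variable {Ω : Type*} {mΩ : MeasurableSpace Ω} {μ : Measure Ω} {X Y : Ω → ℝ}

lemma covariance_le_sqrt_variance_mul_sqrt_variance [IsFiniteMeasure μ]
    (hX : MemLp X 2 μ) (hY : MemLp Y 2 μ) :
    cov[X, Y; μ] ≤ √Var[X; μ] * √Var[Y; μ] := by
  -- `Var[X - t • Y] ≥ 0` for all `t`, so this quadratic in `t` has nonpositive discriminant.
  have hquad : ∀ t : ℝ, 0 ≤ Var[Y; μ] * (t * t) + (-2 * cov[X, Y; μ]) * t + Var[X; μ] := by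
    intro t
    have := variance_nonneg (X - t • Y) μ
    rw [variance_sub hX (hY.const_smul t), covariance_smul_right, variance_smul] at this
    linarith
  have hdiscr := discrim_le_zero hquad
  rw [discrim] at hdiscr
  rw [← Real.sqrt_mul (variance_nonneg X μ)]
  exact (le_abs_self _).trans (Real.abs_le_sqrt (by nlinarith))

variable [IsProbabilityMeasure μ]

lemma integral_sq_eq_sq_integral_add_variance (hX : MemLp X 2 μ) :
    μ[X ^ 2] = μ[X] ^ 2 + Var[X; μ] := by
  rw [variance_eq_sub hX]
  ring

lemma sq_integral_sub_add_sq_sqrt_variance_sub_le (hX : MemLp X 2 μ) (hY : MemLp Y 2 μ) :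
    (μ[X] - μ[Y]) ^ 2 + (√Var[X; μ] - √Var[Y; μ]) ^ 2 ≤ μ[(X - Y) ^ 2] := by
  have hcov := covariance_le_sqrt_variance_mul_sqrt_variance hX hY
  rw [integral_sq_eq_sq_integral_add_variance (hX.sub hY),
    integral_sub' (hX.integrable one_le_two) (hY.integrable one_le_two), variance_sub hX hY,
    sub_sq √Var[X; μ], Real.sq_sqrt (variance_nonneg X μ), Real.sq_sqrt (variance_nonneg Y μ)]
  linarith

end Moments

lemma gaussianReal_map_const_add_const_mul (m a c : ℝ) (v : ℝ≥0) :
    (gaussianReal m v).map (fun x => a + c * x)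
      = gaussianReal (a + c * m) (.mk (c ^ 2) (sq_nonneg _) * v) := by
  rw [show (fun x => a + c * x) = (a + ·) ∘ (c * ·) from rfl,
    ← Measure.map_map (by fun_prop) (by fun_prop), gaussianReal_map_const_mul,
    gaussianReal_map_const_add, add_comm]

lemma integral_sq_gaussianReal (m : ℝ) (v : ℝ≥0) :
    ∫ x, x ^ 2 ∂gaussianReal m v = m ^ 2 + v := by
  simpa [integral_id_gaussianReal, variance_id_gaussianReal] using
    integral_sq_eq_sq_integral_add_variance (memLp_id_gaussianReal (μ := m) (v := v) 2)

lemma map_prodMk_mem_couplings {α : Type*} [MeasurableSpace α] {μ : Measure α} {T : α → α}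
    (hT : Measurable T) :
    μ.map (fun x => (x, T x)) ∈ couplings μ (μ.map T) := by
  constructor <;> rw [Measure.map_map (by fun_prop) (by fun_prop)]
  · exact Measure.map_id
  · rfl

lemma transportCost_two_eq_ofReal_integral {γ : Measure (ℝ × ℝ)}
    (h : Integrable (fun z : ℝ × ℝ => (z.1 - z.2) ^ 2) γ) :
    transportCost 2 γ = ENNReal.ofReal (∫ z, (z.1 - z.2) ^ 2 ∂γ) := by
  rw [ofReal_integral_eq_lintegral_ofReal h (ae_of_all _ fun z => sq_nonneg _), transportCost]
  congr with z
  rw [ENNReal.rpow_two, ← Real.enorm_eq_ofReal (sq_nonneg _), enorm_pow]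
  rfl

lemma transportCost_two_map_prodMk {μ : Measure ℝ} {T : ℝ → ℝ} (hT : Measurable T)
    (h : Integrable (fun x => (x - T x) ^ 2) μ) :
    transportCost 2 (μ.map fun x => (x, T x))
      = ENNReal.ofReal (∫ x, (x - T x) ^ 2 ∂μ) := by
  have hmeas : Measurable fun x => (x, T x) := measurable_id.prodMk hT
  rw [transportCost_two_eq_ofReal_integral ((integrable_map_measure (by fun_prop)
    hmeas.aemeasurable).2 h), integral_map hmeas.aemeasurable (by fun_prop)]

lemma ofReal_sq_sub_add_sq_sqrt_variance_sub_le_wassersteinPow_two {μ ν : Measure ℝ}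
    [IsProbabilityMeasure μ] (hμ : MemLp id 2 μ) (hν : MemLp id 2 ν) :
    ENNReal.ofReal ((μ[id] - ν[id]) ^ 2 + (√Var[id; μ] - √Var[id; ν]) ^ 2)
      ≤ wassersteinPow 2 μ ν := by
  refine le_iInf₂ fun γ ⟨hfst, hsnd⟩ => ?_
  have : IsProbabilityMeasure γ :=
    (Measure.isProbabilityMeasure_map_iff measurable_fst.aemeasurable).1 (hfst ▸ inferInstance)
  have hX : MemLp Prod.fst 2 γ :=
    (memLp_map_measure_iff (g := id) (by fun_prop) (by fun_prop)).1 (hfst ▸ hμ)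
  have hY : MemLp Prod.snd 2 γ :=
    (memLp_map_measure_iff (g := id) (by fun_prop) (by fun_prop)).1 (hsnd ▸ hν)
  rw [transportCost_two_eq_ofReal_integral (hX.sub hY).integrable_sq, ← hfst, ← hsnd,
    integral_map (by fun_prop) (by fun_prop), integral_map (by fun_prop) (by fun_prop),
    variance_id_map (by fun_prop), variance_id_map (by fun_prop)]
  exact ENNReal.ofReal_le_ofReal (sq_integral_sub_add_sq_sqrt_variance_sub_le hX hY)

section GaussianTransport

variable (m0 m1 : ℝ) (σ0 σ1 : ℝ≥0)

def gaussianTransport (x : ℝ) : ℝ := m1 + √((σ1 : ℝ) / σ0) * (x - m0)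

@[fun_prop]
lemma measurable_gaussianTransport : Measurable (gaussianTransport m0 m1 σ0 σ1) := by
  unfold gaussianTransport
  fun_prop

lemma gaussianTransport_eq_affine :
    gaussianTransport m0 m1 σ0 σ1
      = fun x => (m1 - √((σ1 : ℝ) / σ0) * m0) + √((σ1 : ℝ) / σ0) * x := by
  funext x
  unfold gaussianTransport
  ring

lemma id_sub_gaussianTransport_eq_affine :
    (fun x => x - gaussianTransport m0 m1 σ0 σ1 x)
      = fun x => (√((σ1 : ℝ) / σ0) * m0 - m1) + (1 - √((σ1 : ℝ) / σ0)) * x := by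
  funext x
  unfold gaussianTransport
  ring

lemma sqrt_div_mul_sqrt (hσ0 : 0 < σ0) : √((σ1 : ℝ) / σ0) * √σ0 = √σ1 := by
  rw [← Real.sqrt_mul (by positivity), div_mul_cancel₀ _ (NNReal.coe_pos.2 hσ0).ne']

lemma gaussianReal_map_gaussianTransport (hσ0 : 0 < σ0) :
    (gaussianReal m0 σ0).map (gaussianTransport m0 m1 σ0 σ1) = gaussianReal m1 σ1 := by
  rw [gaussianTransport_eq_affine, gaussianReal_map_const_add_const_mul]
  congr 1
  · ring
  · ext
    rw [NNReal.coe_mul, NNReal.coe_mk, Real.sq_sqrt (by positivity),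
      div_mul_cancel₀ _ (NNReal.coe_pos.2 hσ0).ne']

lemma memLp_id_sub_gaussianTransport :
    MemLp (fun x => x - gaussianTransport m0 m1 σ0 σ1 x) 2 (gaussianReal m0 σ0) := by
  rw [id_sub_gaussianTransport_eq_affine]
  exact (memLp_const (√((σ1 : ℝ) / σ0) * m0 - m1)).add
    ((memLp_id_gaussianReal' 2 ofNat_ne_top).const_mul (1 - √((σ1 : ℝ) / σ0)))

lemma integral_sq_id_sub_gaussianTransport (hσ0 : 0 < σ0) :
    ∫ x, (x - gaussianTransport m0 m1 σ0 σ1 x) ^ 2 ∂gaussianReal m0 σ0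
      = (m0 - m1) ^ 2 + (√σ0 - √σ1) ^ 2 := by
  rw [← integral_map (f := (· ^ 2)) (by fun_prop) (by fun_prop),
    id_sub_gaussianTransport_eq_affine, gaussianReal_map_const_add_const_mul,
    integral_sq_gaussianReal, NNReal.coe_mul, NNReal.coe_mk, ← sqrt_div_mul_sqrt σ0 σ1 hσ0]
  linear_combination -(1 - √((σ1 : ℝ) / σ0)) ^ 2 * Real.sq_sqrt σ0.coe_nonneg

end GaussianTransport

theorem gaussian_optimal_map_general (m0 m1 : ℝ) (σ0 σ1 : ℝ≥0) (h0 : 0 < σ0)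
    (T : ℝ → ℝ) (hT : T = fun x => m1 + Real.sqrt ((σ1 : ℝ) / (σ0 : ℝ)) * (x - m0)) :
    (gaussianReal m0 σ0).map T = gaussianReal m1 σ1 ∧
    (∫ x, (x - T x) ^ 2 ∂(gaussianReal m0 σ0)) =
      (m0 - m1) ^ 2 + (Real.sqrt σ0 - Real.sqrt σ1) ^ 2 ∧
    (gaussianReal m0 σ0).map (fun x => (x, T x)) ∈
      couplings (gaussianReal m0 σ0) (gaussianReal m1 σ1) ∧
    transportCost 2 ((gaussianReal m0 σ0).map (fun x => (x, T x))) =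
      wassersteinPow 2 (gaussianReal m0 σ0) (gaussianReal m1 σ1) := by
  obtain rfl : T = gaussianTransport m0 m1 σ0 σ1 := hT
  have hpush := gaussianReal_map_gaussianTransport m0 m1 σ0 σ1 h0
  have hcost := integral_sq_id_sub_gaussianTransport m0 m1 σ0 σ1 h0
  have hcoupling := map_prodMk_mem_couplings (μ := gaussianReal m0 σ0)
    (measurable_gaussianTransport m0 m1 σ0 σ1)
  rw [hpush] at hcoupling
  refine ⟨hpush, hcost, hcoupling, le_antisymm ?_ (iInf₂_le _ hcoupling)⟩
  rw [transportCost_two_map_prodMk (measurable_gaussianTransport m0 m1 σ0 σ1)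
    (memLp_id_sub_gaussianTransport m0 m1 σ0 σ1).integrable_sq, hcost]
  simpa [integral_id_gaussianReal, variance_id_gaussianReal] using
    ofReal_sq_sub_add_sq_sqrt_variance_sub_le_wassersteinPow_two
      (memLp_id_gaussianReal (μ := m0) (v := σ0) 2)
      (memLp_id_gaussianReal (μ := m1) (v := σ1) 2)

/-- optimal map between one-dimensional Gaussians. -/
theorem gaussian_optimal_map (m0 m1 : ℝ) (σ0 σ1 : ℝ≥0) (h0 : 0 < σ0) (h1 : 0 < σ1)
    (T : ℝ → ℝ) (hT : T = fun x => m1 + Real.sqrt ((σ1 : ℝ) / (σ0 : ℝ)) * (x - m0)) :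
    (gaussianReal m0 σ0).map T = gaussianReal m1 σ1 ∧
    (∫ x, (x - T x) ^ 2 ∂(gaussianReal m0 σ0)) =
      (m0 - m1) ^ 2 + (Real.sqrt σ0 - Real.sqrt σ1) ^ 2 ∧
    (gaussianReal m0 σ0).map (fun x => (x, T x)) ∈
      couplings (gaussianReal m0 σ0) (gaussianReal m1 σ1) ∧
    transportCost 2 ((gaussianReal m0 σ0).map (fun x => (x, T x))) =
      wassersteinPow 2 (gaussianReal m0 σ0) (gaussianReal m1 σ1) :=
  gaussian_optimal_map_general m0 m1 σ0 σ1 h0 T hT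
end
end
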